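/- There exist constants ε>0 and K≥1 (depending only on the model parameters) such that, almost surely in (G,z), whenever t,|λ|,|η| ≤ ε, the Gibbs exponential moment satisfies ⟨exp(t‖σ⃗‖²)⟩_{λ,η} ≤ exp(KN(‖z̄‖² + ‖Ḡ‖_op² + 1 + h²)), where z̄:=z/√N and ‖Ḡ‖_op is the operator norm of Ḡ. -/

import Mathlib

open MeasureTheory ProbabilityTheory Real Filter

noncomputable section

/-- Law of the disorder `(G, z)`: i.i.d. standard gaussian matrix entries and
i.i.d. `N(0, Δ*)` noise. -/
def disorder (M N : ℕ) (Δ : ℝ) : Measure ((Fin M → Fin N → ℝ) × (Fin M → ℝ)) :=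
  (Measure.pi fun _ : Fin M => Measure.pi fun _ : Fin N => gaussianReal 0 1).prod
    (Measure.pi fun _ : Fin M => gaussianReal 0 Δ.toNNReal)

/-- `S_k(σ) = (Ḡ σ)_k` with `Ḡ = G/√N`. -/
def Sk {M N : ℕ} (G : Fin M → Fin N → ℝ) (σ : Fin N → ℝ) (k : Fin M) : ℝ :=
  (∑ i, G k i * σ i) / Real.sqrt (N : ℝ)

/-- Euclidean norm of a vector in `ℝⁿ`. -/
def vnorm {n : ℕ} (s : Fin n → ℝ) : ℝ := Real.sqrt (∑ ℓ, (s ℓ) ^ 2)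

/-- Euclidean norm of a replica configuration `σ⃗ ∈ (ℝ^N)ⁿ`. -/
def cnorm {n N : ℕ} (σv : Fin n → Fin N → ℝ) : ℝ := Real.sqrt (∑ ℓ, ∑ i, (σv ℓ i) ^ 2)

/-- Generalized overlap `R(σ⃗) = (1/N) Σ_i φ(σ_i¹,…,σ_iⁿ)`. -/
def Rgen {n N : ℕ} (φ : (Fin n → ℝ) → ℝ) (σv : Fin n → Fin N → ℝ) : ℝ :=
  (∑ i, φ (fun ℓ => σv ℓ i)) / (N : ℝ)

/-- Generalized overlap `Q(σ⃗) = (1/N) Σ_k ψ(S_k(σ¹)+z_k,…,S_k(σⁿ)+z_k)`. -/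
def Qgen {n M N : ℕ} (ψ : (Fin n → ℝ) → ℝ) (G : Fin M → Fin N → ℝ) (z : Fin M → ℝ)
    (σv : Fin n → Fin N → ℝ) : ℝ :=
  (∑ k, ψ (fun ℓ => Sk G (σv ℓ) k + z k)) / (N : ℝ)

/-- Hamiltonian `X_{N,λ,η}` of the coupled replicas. -/
def Xgen {n M N : ℕ} (u : ℝ → ℝ) (φ ψ : (Fin n → ℝ) → ℝ) (h κ lam η : ℝ)
    (G : Fin M → Fin N → ℝ) (z : Fin M → ℝ) (σv : Fin n → Fin N → ℝ) : ℝ :=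
  (∑ ℓ, ∑ k, u (Sk G (σv ℓ) k + z k)) + h * (∑ ℓ, ∑ i, σv ℓ i) -
    κ * (∑ ℓ, ∑ i, (σv ℓ i) ^ 2) + lam * (N : ℝ) * Rgen φ σv + η * (N : ℝ) * Qgen ψ G z σv

/-- Partition function `Z_{N,λ,η}`. -/
def Zgen {n M N : ℕ} (u : ℝ → ℝ) (φ ψ : (Fin n → ℝ) → ℝ) (h κ lam η : ℝ)
    (G : Fin M → Fin N → ℝ) (z : Fin M → ℝ) : ℝ :=
  ∫ σv : Fin n → Fin N → ℝ, Real.exp (Xgen u φ ψ h κ lam η G z σv)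

/-- Gibbs expectation `⟨·⟩_{λ,η}`. -/
def gibbsGen {n M N : ℕ} (u : ℝ → ℝ) (φ ψ : (Fin n → ℝ) → ℝ) (h κ lam η : ℝ)
    (G : Fin M → Fin N → ℝ) (z : Fin M → ℝ) (f : (Fin n → Fin N → ℝ) → ℝ) : ℝ :=
  (∫ σv : Fin n → Fin N → ℝ, f σv * Real.exp (Xgen u φ ψ h κ lam η G z σv)) /
    Zgen u φ ψ h κ lam η G z

/-- Free energy `F_N(λ,η)`. -/
def Fgen {n M N : ℕ} (u : ℝ → ℝ) (φ ψ : (Fin n → ℝ) → ℝ) (h κ lam η : ℝ)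
    (G : Fin M → Fin N → ℝ) (z : Fin M → ℝ) : ℝ :=
  (1 / (N : ℝ)) * Real.log (Zgen (n := n) u φ ψ h κ lam η G z)

/-- Operator norm of an `M × N` matrix acting on Euclidean spaces. -/
def opNorm {M N : ℕ} (A : Fin M → Fin N → ℝ) : ℝ :=
  ‖(LinearMap.toContinuousLinearMap (Matrix.toEuclideanLin (Matrix.of A)))‖

/-- Growth conditions (G-1)–(G-3) on `u`, `φ`, `ψ`. -/
def Growth (n : ℕ) (u : ℝ → ℝ) (φ ψ : (Fin n → ℝ) → ℝ) (d η0 α : ℝ) : Prop :=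
  (∀ s, u s ≤ 0 ∧ -(d * (1 + s ^ 2)) ≤ u s) ∧
  (∀ s, |deriv u s| ≤ d * (1 + |s|)) ∧
  (∀ s s', |φ s - φ s'| ≤ d * (1 + vnorm s + vnorm s') * vnorm (s - s')) ∧
  (∀ s s', |ψ s - ψ s'| ≤ d * (1 + vnorm s + vnorm s') * vnorm (s - s')) ∧
  (∀ s, |φ s| ≤ d * (1 + (vnorm s) ^ 2)) ∧
  (∀ s, |ψ s| ≤ d * (1 + (vnorm s) ^ 2)) ∧
  ContDiff ℝ 2 φ ∧ ContDiff ℝ 2 ψ ∧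
  (∀ (s : Fin n → ℝ) (l l' : Fin n),
    |fderiv ℝ (fun y => fderiv ℝ φ y (Pi.single l' 1)) s (Pi.single l 1)| ≤ d) ∧
  (∀ (s : Fin n → ℝ) (l l' : Fin n),
    |fderiv ℝ (fun y => fderiv ℝ ψ y (Pi.single l' 1)) s (Pi.single l 1)| ≤ d) ∧
  (∀ y : Fin n → ℝ, (∑ ℓ, u (y ℓ)) + η0 * |ψ y| ≤ α * d)

/-!
For `|λ|, |η| ≤ ε`, completing the square in the field term and using (G-3) to absorb `η Q`
into the nonpositive `u`-terms give `X ≤ C N - (κ/4) ‖σ⃗‖²`, so the numerator of the Gibbs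
average is at most `e^{CN}` times a Gaussian integral `(8π/κ)^{nN/2}`. On the unit cube
`[0,1]^{nN}`, which has volume one, the quadratic growth bounds together with
`‖Ḡσ‖ ≤ ‖Ḡ‖_op ‖σ‖` give `X ≥ -C' N (‖z̄‖² + ‖Ḡ‖_op² + 1 + h²)`, which bounds the partition
function from below. Both bounds hold for every realisation of `(G, z)`.
-/

open Finset

section Gaussian

variable {n N : ℕ}

lemma cnorm_sq (σv : Fin n → Fin N → ℝ) : cnorm σv ^ 2 = ∑ ℓ, ∑ i, σv ℓ i ^ 2 :=
  Real.sq_sqrt (by positivity)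

lemma exp_neg_mul_cnorm_sq (c : ℝ) (σv : Fin n → Fin N → ℝ) :
    exp (-c * cnorm σv ^ 2) = ∏ ℓ, ∏ i, exp (-c * σv ℓ i ^ 2) := by
  simp only [cnorm_sq, mul_sum, Real.exp_sum]

lemma integrable_exp_neg_mul_cnorm_sq {c : ℝ} (hc : 0 < c) :
    Integrable fun σv : Fin n → Fin N → ℝ => exp (-c * cnorm σv ^ 2) := by
  simp_rw [exp_neg_mul_cnorm_sq]
  exact Integrable.fintype_prod fun _ =>
    Integrable.fintype_prod (f := fun _ x => exp (-c * x ^ 2)) fun _ => integrable_exp_neg_mul_sq hc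

lemma integral_exp_neg_mul_cnorm_sq (c : ℝ) :
    ∫ σv : Fin n → Fin N → ℝ, exp (-c * cnorm σv ^ 2) = √(π / c) ^ (n * N) := by
  simp_rw [exp_neg_mul_cnorm_sq]
  rw [integral_fintype_prod_volume_eq_pow (fun v : Fin N → ℝ => ∏ i, exp (-c * v i ^ 2)),
    integral_fintype_prod_volume_eq_pow (fun x : ℝ => exp (-c * x ^ 2)), integral_gaussian]
  simp [mul_comm n, pow_mul]

end Gaussian

lemma volume_Icc_zero_one_pi_pi {ι τ : Type*} [Fintype ι] [Fintype τ] :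
    volume (Set.Icc (0 : ι → τ → ℝ) 1) = 1 := by
  rw [← Set.pi_univ_Icc, volume_pi_pi]
  simp [Real.volume_Icc_pi]

lemma exp_neg_le_integral_exp {ι τ : Type*} [Fintype ι] [Fintype τ] {X : (ι → τ → ℝ) → ℝ} {b : ℝ}
    (hX : Integrable fun σ => exp (X σ)) (hlow : ∀ σ ∈ Set.Icc 0 1, -b ≤ X σ) :
    exp (-b) ≤ ∫ σ, exp (X σ) :=
  calc exp (-b) = exp (-b) * volume.real (Set.Icc (0 : ι → τ → ℝ) 1) := by
        simp [measureReal_def, volume_Icc_zero_one_pi_pi]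
    _ ≤ ∫ σ in Set.Icc 0 1, exp (X σ) :=
        setIntegral_ge_of_const_le_real measurableSet_Icc (by simp [volume_Icc_zero_one_pi_pi])
          (fun σ hσ => exp_le_exp.2 (hlow σ hσ)) hX.integrableOn
    _ ≤ ∫ σ, exp (X σ) := setIntegral_le_integral hX (ae_of_all _ fun _ => (exp_pos _).le)

lemma integral_mul_exp_div_integral_exp_le {n N : ℕ} {X : (Fin n → Fin N → ℝ) → ℝ}
    (hX : Continuous X) {a b c t : ℝ} (hc : 0 < c) (ht : t ≤ c)
    (hup : ∀ σv, X σv ≤ a - 2 * c * cnorm σv ^ 2) (hlow : ∀ σv ∈ Set.Icc 0 1, -b ≤ X σv) :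
    (∫ σv, exp (t * cnorm σv ^ 2) * exp (X σv)) / ∫ σv, exp (X σv) ≤
      exp (a + b) * √(π / c) ^ (n * N) := by
  set w := fun σv : Fin n → Fin N → ℝ => exp a * exp (-c * cnorm σv ^ 2)
  have hw : Integrable w := (integrable_exp_neg_mul_cnorm_sq hc).const_mul _
  have htXw : ∀ {s}, s ≤ c → ∀ σv, exp (s * cnorm σv ^ 2) * exp (X σv) ≤ w σv := by
    intro s hs σv
    simp only [w, ← exp_add]
    exact exp_le_exp.2 (by nlinarith [hup σv, sq_nonneg (cnorm σv)])
  have hXi : Integrable fun σv => exp (X σv) :=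
    hw.mono' hX.rexp.aestronglyMeasurable <| ae_of_all _ fun σv => by
      simpa [abs_of_pos (exp_pos _)] using htXw hc.le σv
  have hnum : ∫ σv, exp (t * cnorm σv ^ 2) * exp (X σv) ≤ exp a * √(π / c) ^ (n * N) :=
    calc _ ≤ ∫ σv, w σv :=
          integral_mono_of_nonneg (ae_of_all _ fun _ => by positivity) hw (ae_of_all _ (htXw ht))
      _ = _ := by rw [integral_const_mul, integral_exp_neg_mul_cnorm_sq]
  calc _ ≤ exp a * √(π / c) ^ (n * N) / exp (-b) :=
        div_le_div₀ (by positivity) hnum (exp_pos _) (exp_neg_le_integral_exp hXi hlow)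
    _ = _ := by rw [exp_add, exp_neg, div_inv_eq_mul]; ring

section Sums

variable {ι τ : Type*} [Fintype ι] [Fintype τ]

lemma sum_sum_le_card_mul {f : ι → τ → ℝ} {c : ℝ} (hf : ∀ ℓ i, f ℓ i ≤ c) :
    ∑ ℓ, ∑ i, f ℓ i ≤ Fintype.card ι * Fintype.card τ * c :=
  calc _ ≤ ∑ _ℓ : ι, ∑ _i : τ, c := sum_le_sum fun ℓ _ => sum_le_sum fun i _ => hf ℓ i
    _ = _ := by simp [mul_assoc]

lemma neg_le_sum_sum_of_neg_quadratic_le {f : ℝ → ℝ} {d : ℝ}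
    (hf : ∀ s, -(d * (1 + s ^ 2)) ≤ f s) (x : ι → τ → ℝ) :
    -(d * (Fintype.card ι * Fintype.card τ + ∑ ℓ, ∑ i, x ℓ i ^ 2)) ≤ ∑ ℓ, ∑ i, f (x ℓ i) := by
  have key := sum_sum_le_card_mul (c := d) fun ℓ i => show -f (x ℓ i) - d * x ℓ i ^ 2 ≤ d by
    linarith [hf (x ℓ i)]
  simp only [sum_sub_distrib, sum_neg_distrib, ← mul_sum] at key
  linarith

lemma mul_sum_sum_le {κ : ℝ} (hκ : 0 < κ) (h : ℝ) (x : ι → τ → ℝ) :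
    h * ∑ ℓ, ∑ i, x ℓ i ≤
      Fintype.card ι * Fintype.card τ * (h ^ 2 / (2 * κ)) + κ / 2 * ∑ ℓ, ∑ i, x ℓ i ^ 2 := by
  have key := sum_sum_le_card_mul (c := h ^ 2 / (2 * κ)) fun ℓ i =>
    show h * x ℓ i - κ / 2 * x ℓ i ^ 2 ≤ h ^ 2 / (2 * κ) by
      rw [le_div_iff₀ (by positivity)]; nlinarith [sq_nonneg (κ * x ℓ i - h)]
  simp only [sum_sub_distrib, ← mul_sum] at key
  linarith

lemma abs_sum_sum_le_of_mem_Icc {x : ι → τ → ℝ} (hx : x ∈ Set.Icc 0 1) :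
    |∑ ℓ, ∑ i, x ℓ i| ≤ Fintype.card ι * Fintype.card τ := by
  rw [abs_of_nonneg (sum_nonneg fun ℓ _ => sum_nonneg fun i _ => hx.1 ℓ i), ← mul_one (_ * _ : ℝ)]
  exact sum_sum_le_card_mul fun ℓ i => hx.2 ℓ i

lemma sum_sum_sq_le_of_mem_Icc {x : ι → τ → ℝ} (hx : x ∈ Set.Icc 0 1) :
    ∑ ℓ, ∑ i, x ℓ i ^ 2 ≤ Fintype.card ι * Fintype.card τ := by
  rw [← mul_one (_ * _ : ℝ)]
  exact sum_sum_le_card_mul fun ℓ i => pow_le_one₀ (hx.1 ℓ i) (hx.2 ℓ i)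

lemma sum_sum_add_mul_sum_le {u : ℝ → ℝ} {ψ : (ι → ℝ) → ℝ} {η0 A η : ℝ}
    (hG3 : ∀ y, ∑ ℓ, u (y ℓ) + η0 * |ψ y| ≤ A) (hη : |η| ≤ η0) (x : ι → τ → ℝ) :
    ∑ ℓ, ∑ i, u (x ℓ i) + η * ∑ i, ψ (fun ℓ => x ℓ i) ≤ Fintype.card τ * A := by
  rw [sum_comm, mul_sum, ← sum_add_distrib]
  calc _ ≤ ∑ _i : τ, A := sum_le_sum fun i _ => by
        have hηψ : η * ψ (fun ℓ => x ℓ i) ≤ η0 * |ψ (fun ℓ => x ℓ i)| :=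
          (le_abs_self _).trans ((abs_mul _ _).trans_le
            (mul_le_mul_of_nonneg_right hη (abs_nonneg _)))
        linarith [hG3 (fun ℓ => x ℓ i)]
    _ = _ := by simp

end Sums

lemma vnorm_sq {n : ℕ} (s : Fin n → ℝ) : vnorm s ^ 2 = ∑ ℓ, s ℓ ^ 2 :=
  Real.sq_sqrt (by positivity)

lemma abs_sum_le_of_abs_le_quadratic {ι : Type*} [Fintype ι] {n : ℕ} {f : (Fin n → ℝ) → ℝ}
    {d : ℝ} (hf : ∀ s, |f s| ≤ d * (1 + vnorm s ^ 2)) (x : Fin n → ι → ℝ) :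
    |∑ i, f (fun ℓ => x ℓ i)| ≤ d * (Fintype.card ι + ∑ ℓ, ∑ i, x ℓ i ^ 2) :=
  calc _ ≤ ∑ i, d * (1 + ∑ ℓ, x ℓ i ^ 2) := (abs_sum_le_sum_abs _ _).trans <|
        sum_le_sum fun i _ => by simpa only [vnorm_sq] using hf fun ℓ => x ℓ i
    _ = _ := by simp [sum_comm (γ := Fin n), mul_add, sum_add_distrib, mul_sum, mul_comm]

lemma sum_sq_mulVec_le {M N : ℕ} (A : Fin M → Fin N → ℝ) (σ : Fin N → ℝ) :
    ∑ k, (∑ i, A k i * σ i) ^ 2 ≤ opNorm A ^ 2 * ∑ i, σ i ^ 2 := by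
  set L := LinearMap.toContinuousLinearMap (Matrix.toEuclideanLin (Matrix.of A))
  set x : EuclideanSpace ℝ (Fin N) := WithLp.toLp 2 σ
  have hx : ‖x‖ ^ 2 = ∑ i, σ i ^ 2 := by simp [x, EuclideanSpace.norm_sq_eq]
  have hLx : ‖L x‖ ^ 2 = ∑ k, (∑ i, A k i * σ i) ^ 2 := by
    simp [L, x, EuclideanSpace.norm_sq_eq, Matrix.mulVec, dotProduct]
  rw [← hx, ← hLx, ← mul_pow]
  exact pow_le_pow_left₀ (norm_nonneg _) (L.le_opNorm x) 2

lemma sum_sq_Sk_le {M N : ℕ} (G : Fin M → Fin N → ℝ) (σ : Fin N → ℝ) :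
    ∑ k, Sk G σ k ^ 2 ≤ opNorm (fun k i => G k i / √(N : ℝ)) ^ 2 * ∑ i, σ i ^ 2 := by
  convert sum_sq_mulVec_le _ σ using 3 with k
  simp only [Sk, sum_div, div_mul_eq_mul_div]

lemma sum_sum_sq_Sk_add_le {n M N : ℕ} (G : Fin M → Fin N → ℝ) (z : Fin M → ℝ)
    (σv : Fin n → Fin N → ℝ) :
    ∑ ℓ, ∑ k, (Sk G (σv ℓ) k + z k) ^ 2 ≤
      2 * opNorm (fun k i => G k i / √(N : ℝ)) ^ 2 * cnorm σv ^ 2 + 2 * n * ∑ k, z k ^ 2 := by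
  have hℓ : ∀ ℓ, ∑ k, (Sk G (σv ℓ) k + z k) ^ 2 ≤
      2 * (opNorm (fun k i => G k i / √(N : ℝ)) ^ 2 * ∑ i, σv ℓ i ^ 2) + 2 * ∑ k, z k ^ 2 :=
    fun ℓ => calc
      _ ≤ ∑ k, (2 * Sk G (σv ℓ) k ^ 2 + 2 * z k ^ 2) :=
          sum_le_sum fun k _ => by nlinarith [sq_nonneg (Sk G (σv ℓ) k - z k)]
      _ ≤ _ := by
          rw [sum_add_distrib, ← mul_sum, ← mul_sum]
          gcongr
          exact sum_sq_Sk_le G (σv ℓ)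
  calc _ ≤ ∑ ℓ : Fin n, (2 * (opNorm (fun k i => G k i / √(N : ℝ)) ^ 2 * ∑ i, σv ℓ i ^ 2)
          + 2 * ∑ k, z k ^ 2) := sum_le_sum fun ℓ _ => hℓ ℓ
    _ = _ := by simp [sum_add_distrib, ← mul_sum, cnorm_sq]; ring

section Hamiltonian

variable {n M N : ℕ} {u : ℝ → ℝ} {φ ψ : (Fin n → ℝ) → ℝ} {h κ lam η d : ℝ}
  {G : Fin M → Fin N → ℝ} {z : Fin M → ℝ}

lemma natCast_mul_Rgen (φ : (Fin n → ℝ) → ℝ) (σv : Fin n → Fin N → ℝ) :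
    (N : ℝ) * Rgen φ σv = ∑ i, φ (fun ℓ => σv ℓ i) := by
  rcases N.eq_zero_or_pos with rfl | hN
  · simp [Rgen]
  · exact mul_div_cancel₀ _ (by positivity)

-- `Qgen` divides a sum over `Fin M` by `N`; the normalisation can only be undone when `N = 0`
-- forces `M = 0`, as it does for `M = ⌊αN⌋`.
lemma natCast_mul_Qgen (hMN : N = 0 → M = 0) (ψ : (Fin n → ℝ) → ℝ) (σv : Fin n → Fin N → ℝ) :
    (N : ℝ) * Qgen ψ G z σv = ∑ k, ψ (fun ℓ => Sk G (σv ℓ) k + z k) := by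
  rcases N.eq_zero_or_pos with rfl | hN
  · obtain rfl := hMN rfl
    simp [Qgen]
  · exact mul_div_cancel₀ _ (by positivity)

lemma Xgen_eq (hMN : N = 0 → M = 0) (σv : Fin n → Fin N → ℝ) :
    Xgen u φ ψ h κ lam η G z σv =
      (∑ ℓ, ∑ k, u (Sk G (σv ℓ) k + z k) + η * ∑ k, ψ (fun ℓ => Sk G (σv ℓ) k + z k)) +
        h * ∑ ℓ, ∑ i, σv ℓ i - κ * cnorm σv ^ 2 + lam * ∑ i, φ (fun ℓ => σv ℓ i) := by
  rw [Xgen, mul_assoc lam, natCast_mul_Rgen, mul_assoc η, natCast_mul_Qgen hMN, cnorm_sq]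
  ring

lemma continuous_Xgen (hu : Continuous u) (hφ : Continuous φ) (hψ : Continuous ψ) :
    Continuous (Xgen u φ ψ h κ lam η G z) := by
  unfold Xgen Rgen Qgen Sk
  fun_prop

lemma Xgen_le (hMN : N = 0 → M = 0) (hκ : 0 < κ) {A η0 : ℝ}
    (hG3 : ∀ y, ∑ ℓ, u (y ℓ) + η0 * |ψ y| ≤ A) (hφ : ∀ s, |φ s| ≤ d * (1 + vnorm s ^ 2))
    (hη : |η| ≤ η0) (hlam : |lam| * d ≤ κ / 4) (σv : Fin n → Fin N → ℝ) :
    Xgen u φ ψ h κ lam η G z σv ≤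
      M * A + N * (n * h ^ 2 / (2 * κ) + κ / 4) - κ / 4 * cnorm σv ^ 2 := by
  have hUψ := sum_sum_add_mul_sum_le hG3 hη fun ℓ k => Sk G (σv ℓ) k + z k
  have hh := mul_sum_sum_le hκ h σv
  have hΦ : lam * ∑ i, φ (fun ℓ => σv ℓ i) ≤ κ / 4 * (N + cnorm σv ^ 2) :=
    calc _ ≤ |lam| * |∑ i, φ (fun ℓ => σv ℓ i)| := (le_abs_self _).trans_eq (abs_mul _ _)
      _ ≤ |lam| * (d * (N + cnorm σv ^ 2)) := by
          gcongr
          simpa [cnorm_sq] using abs_sum_le_of_abs_le_quadratic hφ σv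
      _ ≤ _ := by rw [← mul_assoc]; gcongr
  simp only [Fintype.card_fin, ← cnorm_sq] at hUψ hh
  rw [Xgen_eq hMN]
  linear_combination hUψ + hh + hΦ

lemma neg_le_Xgen_of_mem_Icc (hMN : N = 0 → M = 0) (hd : 0 ≤ d) (hκ : 0 ≤ κ)
    (hu : ∀ s, -(d * (1 + s ^ 2)) ≤ u s) (hφ : ∀ s, |φ s| ≤ d * (1 + vnorm s ^ 2))
    (hψ : ∀ s, |ψ s| ≤ d * (1 + vnorm s ^ 2)) (hlam : |lam| ≤ 1) (hη : |η| ≤ 1)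
    {σv : Fin n → Fin N → ℝ} (hσ : σv ∈ Set.Icc 0 1) :
    -(d * (n + 1) * (M + N) +
        4 * d * n * (N * opNorm (fun k i => G k i / √(N : ℝ)) ^ 2 + ∑ k, z k ^ 2) +
        n * N * (|h| + κ)) ≤ Xgen u φ ψ h κ lam η G z σv := by
  set y := fun ℓ k => Sk G (σv ℓ) k + z k
  set B := opNorm (fun k i => G k i / √(N : ℝ))
  have hS : cnorm σv ^ 2 ≤ n * N := by
    simpa [cnorm_sq] using sum_sum_sq_le_of_mem_Icc hσ
  have hY : ∑ ℓ, ∑ k, y ℓ k ^ 2 ≤ 2 * n * (N * B ^ 2 + ∑ k, z k ^ 2) := by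
    have := sum_sum_sq_Sk_add_le G z σv
    nlinarith [sq_nonneg B]
  have hU := neg_le_sum_sum_of_neg_quadratic_le hu y
  have hΨ : |η * ∑ k, ψ (fun ℓ => y ℓ k)| ≤ d * (M + ∑ ℓ, ∑ k, y ℓ k ^ 2) := by
    rw [abs_mul]
    simpa using
      (mul_le_of_le_one_left (abs_nonneg _) hη).trans (abs_sum_le_of_abs_le_quadratic hψ y)
  have hΦ : |lam * ∑ i, φ (fun ℓ => σv ℓ i)| ≤ d * (N + cnorm σv ^ 2) := by
    rw [abs_mul]
    simpa [cnorm_sq] using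
      (mul_le_of_le_one_left (abs_nonneg _) hlam).trans (abs_sum_le_of_abs_le_quadratic hφ σv)
  have hH : |h * ∑ ℓ, ∑ i, σv ℓ i| ≤ |h| * (n * N) := by
    simpa only [abs_mul, Fintype.card_fin] using
      mul_le_mul_of_nonneg_left (abs_sum_sum_le_of_mem_Icc hσ) (abs_nonneg h)
  simp only [Fintype.card_fin] at hU
  rw [Xgen_eq hMN]
  nlinarith [neg_abs_le (η * ∑ k, ψ (fun ℓ => y ℓ k)), neg_abs_le (lam * ∑ i, φ (fun ℓ => σv ℓ i)),
    neg_abs_le (h * ∑ ℓ, ∑ i, σv ℓ i)]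

end Hamiltonian

lemma sum_sq_eq_natCast_mul_sum_div_sqrt_sq {M N : ℕ} (hMN : N = 0 → M = 0) (z : Fin M → ℝ) :
    ∑ k, z k ^ 2 = N * ∑ k, (z k / √(N : ℝ)) ^ 2 := by
  rcases N.eq_zero_or_pos with rfl | hN
  · obtain rfl := hMN rfl
    simp
  · rw [mul_sum]
    refine sum_congr rfl fun k _ => ?_
    rw [div_pow, Real.sq_sqrt (by positivity)]
    field_simp

def momentConst (n : ℕ) (α κ d : ℝ) : ℝ :=
  1 + α ^ 2 * d + κ / 4 + d * (n + 1) * (α + 1) +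
    n * (4 * d + 1 / (2 * κ) + 1 + κ + √(π / (κ / 8)))

lemma one_le_momentConst {n : ℕ} {α κ d : ℝ} (hα : 0 ≤ α) (hκ : 0 < κ) (hd : 0 ≤ d) :
    1 ≤ momentConst n α κ d := by
  unfold momentConst
  have : 0 ≤ α ^ 2 * d + κ / 4 + d * (n + 1) * (α + 1) +
    n * (4 * d + 1 / (2 * κ) + 1 + κ + √(π / (κ / 8))) := by positivity
  linarith

lemma exp_add_mul_sqrt_pow_le_exp_momentConst {n M N : ℕ} {α κ d h B zbar : ℝ} (hα : 0 ≤ α)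
    (hκ : 0 < κ) (hd : 0 ≤ d) (hM : (M : ℝ) ≤ α * N) (hzbar : 0 ≤ zbar) :
    exp (M * (α * d) + N * (n * h ^ 2 / (2 * κ) + κ / 4) +
        (d * (n + 1) * (M + N) + 4 * d * n * (N * B ^ 2 + N * zbar) + n * N * (|h| + κ))) *
      √(π / (κ / 8)) ^ (n * N) ≤
      exp (momentConst n α κ d * N * (zbar + B ^ 2 + 1 + h ^ 2)) := by
  have hr : √(π / (κ / 8)) ^ (n * N) ≤ exp (n * N * √(π / (κ / 8))) := by
    rw [← Nat.cast_mul, exp_nat_mul]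
    exact pow_le_pow_left₀ (by positivity) (by linarith [add_one_le_exp √(π / (κ / 8))]) _
  set E := zbar + B ^ 2 + 1 + h ^ 2
  have hE1 : 1 ≤ E := by nlinarith [sq_nonneg B, sq_nonneg h]
  have hEh : |h| ≤ E := by nlinarith [sq_abs h, sq_nonneg (|h| - 1), sq_nonneg B]
  have hEh2 : h ^ 2 ≤ E := by nlinarith [sq_nonneg B]
  have hEBz : B ^ 2 + zbar ≤ E := by nlinarith [sq_nonneg h]
  have hΦ : α ^ 2 * d + n * h ^ 2 / (2 * κ) + κ / 4 + d * (n + 1) * (α + 1) +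
      4 * d * n * (B ^ 2 + zbar) + n * (|h| + κ) + n * √(π / (κ / 8)) ≤
        momentConst n α κ d * E := by
    unfold momentConst
    linear_combination (exp := 1) (by linarith : (0 : ℝ) ≤ E) +
      mul_le_mul_of_nonneg_left hE1
        (by positivity :
          0 ≤ α ^ 2 * d + κ / 4 + d * (n + 1) * (α + 1) + n * κ + n * √(π / (κ / 8))) +
      mul_le_mul_of_nonneg_left hEh2 (by positivity : (0 : ℝ) ≤ n / (2 * κ)) +
      mul_le_mul_of_nonneg_left hEh (Nat.cast_nonneg n) +
      mul_le_mul_of_nonneg_left hEBz (by positivity : (0 : ℝ) ≤ 4 * d * n)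
  have hαM : M * (α * d) + d * (n + 1) * M ≤ α * N * (α * d) + d * (n + 1) * (α * N) := by
    gcongr
  refine (mul_le_mul_of_nonneg_left hr (exp_pos _).le).trans ?_
  rw [← exp_add, exp_le_exp]
  linear_combination hαM + mul_le_mul_of_nonneg_left hΦ (Nat.cast_nonneg N)

theorem gibbs_exponential_moment_general
    (n : ℕ) (α κ h Δs d η0 : ℝ)
    (hα : 0 < α) (hκ : 0 < κ) (hd : 0 < d) (hη0 : 0 < η0)
    (u : ℝ → ℝ) (hdiff : Differentiable ℝ u)
    (φ ψ : (Fin n → ℝ) → ℝ) (hG : Growth n u φ ψ d η0 α) :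
    ∃ ε > 0, ∃ K ≥ (1 : ℝ), ∀ N : ℕ,
      ∀ᵐ gz ∂(disorder ⌊α * (N : ℝ)⌋₊ N Δs),
        ∀ t lam η : ℝ, t ≤ ε → |lam| ≤ ε → |η| ≤ ε →
          gibbsGen u φ ψ h κ lam η gz.1 gz.2
              (fun σv => Real.exp (t * (cnorm σv) ^ 2)) ≤
            Real.exp (K * (N : ℝ) * ((∑ k, (gz.2 k / Real.sqrt (N : ℝ)) ^ 2) +
              (opNorm (fun k i => gz.1 k i / Real.sqrt (N : ℝ))) ^ 2 + 1 + h ^ 2)) := by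
  obtain ⟨hu, -, -, -, hφ, hψ, hφC, hψC, -, -, hG3⟩ := hG
  set ε := min (min η0 1) (κ / (8 * (1 + d)))
  have hε0 : 0 ≤ ε := by positivity
  have hεκ : 8 * ε + 8 * (ε * d) ≤ κ := by
    linear_combination (le_div_iff₀ (by positivity)).1 (min_le_right _ _ : ε ≤ κ / (8 * (1 + d)))
  have hεη0 : ε ≤ η0 := (min_le_left _ _).trans (min_le_left _ _)
  have hε1 : ε ≤ 1 := (min_le_left _ _).trans (min_le_right _ _)
  refine ⟨ε, by positivity, momentConst n α κ d, one_le_momentConst hα.le hκ hd.le,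
    fun N => ae_of_all _ fun ⟨G, z⟩ t lam η ht hlam hη => ?_⟩
  have hMN : N = 0 → ⌊α * N⌋₊ = 0 := by rintro rfl; simp
  have hlamd : |lam| * d ≤ κ / 4 := by
    linarith [mul_le_mul_of_nonneg_right hlam hd.le, mul_nonneg hε0 hd.le]
  calc gibbsGen u φ ψ h κ lam η G z (fun σv => exp (t * cnorm σv ^ 2))
      ≤ exp ((⌊α * N⌋₊ * (α * d) + N * (n * h ^ 2 / (2 * κ) + κ / 4)) + _) *
          √(π / (κ / 8)) ^ (n * N) :=
        integral_mul_exp_div_integral_exp_le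
          (continuous_Xgen hdiff.continuous hφC.continuous hψC.continuous)
          (by positivity) (by linarith [mul_nonneg hε0 hd.le])
          (fun σv => (Xgen_le hMN hκ hG3 hφ (hη.trans hεη0) hlamd σv).trans_eq (by ring))
          (fun σv hσ => neg_le_Xgen_of_mem_Icc hMN hd.le hκ.le (fun s => (hu s).2) hφ hψ
            (hlam.trans hε1) (hη.trans hε1) hσ)
    _ ≤ _ := by
        rw [sum_sq_eq_natCast_mul_sum_div_sqrt_sq hMN z]
        exact exp_add_mul_sqrt_pow_le_exp_momentConst hα.le hκ hd.le
          (Nat.floor_le (by positivity)) (by positivity)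

/-- Lemma 4.2: there are `ε > 0` and `K ≥ 1` such that, a.s. in
`(G,z)`, for `t, |λ|, |η| ≤ ε`,
`⟨exp(t‖σ⃗‖²)⟩_{λ,η} ≤ exp(KN(‖z̄‖² + ‖Ḡ‖_op² + 1 + h²))`. -/
theorem gibbs_exponential_moment
    (n : ℕ) (hn : 1 ≤ n) (α κ h Δs d η0 : ℝ)
    (hα : 0 < α) (hκ : 0 < κ) (hΔs : 0 ≤ Δs) (hd : 0 < d) (hη0 : 0 < η0)
    (u : ℝ → ℝ) (hdiff : Differentiable ℝ u)
    (φ ψ : (Fin n → ℝ) → ℝ) (hG : Growth n u φ ψ d η0 α) :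
    ∃ ε > 0, ∃ K ≥ (1 : ℝ), ∀ N : ℕ,
      ∀ᵐ gz ∂(disorder ⌊α * (N : ℝ)⌋₊ N Δs),
        ∀ t lam η : ℝ, t ≤ ε → |lam| ≤ ε → |η| ≤ ε →
          gibbsGen u φ ψ h κ lam η gz.1 gz.2
              (fun σv => Real.exp (t * (cnorm σv) ^ 2)) ≤
            Real.exp (K * (N : ℝ) * ((∑ k, (gz.2 k / Real.sqrt (N : ℝ)) ^ 2) +
              (opNorm (fun k i => gz.1 k i / Real.sqrt (N : ℝ))) ^ 2 + 1 + h ^ 2)) :=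
  gibbs_exponential_moment_general n α κ h Δs d η0 hα hκ hd hη0 u hdiff φ ψ hG

end
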